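/- Let H be a unicyclic graph (connected, n vertices and n edges, all vertices used) with connection φ and cycle holonomy w ≠ 1. Then the vectors α_{ij} = u_i − φ_{ij} u_j over the edges of H span all of R^n, and likewise the vectors e_{ij} = u_i − φ_{ji} u_j span R^n. -/

import Mathlib

/-!
Every edge vector has the form `u_a - t • u_b` with `t ≠ 0`, so once `u_a` lies in
the span, so does `u_b`. Telescoping the edge vectors once around the cycle from `u_{c 0}` back to
itself puts `(1 - w) • u_{c 0}` into the span; since `w ≠ 1`, this gives `u_{c 0}`, hence every
`u_{c i}`, and then, by induction on the depth, every vertex of the trees hanging off the cycle.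
-/

open scoped Classical

def cycSucc {s : ℕ} (h : 0 < s) (i : Fin s) : Fin s := ⟨(i.val + 1) % s, Nat.mod_lt _ h⟩

open Finset

theorem Submodule.sub_prod_smul_mem {K M : Type*} [CommRing K] [AddCommGroup M] [Module K M]
    {p : Submodule K M} {x : ℕ → M} {t : ℕ → K}
    (h : ∀ k, x k - t k • x (k + 1) ∈ p) (k : ℕ) :
    x 0 - (∏ j ∈ range k, t j) • x k ∈ p := by
  induction k with
  | zero => simp
  | succ k ih =>
    have hsplit : x 0 - (∏ j ∈ range (k + 1), t j) • x (k + 1)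
        = (x 0 - (∏ j ∈ range k, t j) • x k) + (∏ j ∈ range k, t j) • (x k - t k • x (k + 1)) := by
      rw [prod_range_succ]
      module
    rw [hsplit]
    exact p.add_mem ih (p.smul_mem _ (h k))

section SubmoduleMembership

variable {K M : Type*} [Field K] [AddCommGroup M] [Module K M] {p : Submodule K M}

theorem Submodule.mem_of_sub_smul_mem {x y : M} {t : K} (ht : t ≠ 0) (hx : x ∈ p)
    (h : x - t • y ∈ p) : y ∈ p :=
  (p.smul_mem_iff ht).1 (by simpa using p.sub_mem hx h)

theorem Submodule.forall_mem_of_sub_smul_cycSucc_mem {s : ℕ} (hs : 0 < s) {x : Fin s → M}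
    {t : Fin s → K} (ht : ∀ i, t i ≠ 0) (hprod : ∏ i, t i ≠ 1)
    (h : ∀ i, x i - t i • x (cycSucc hs i) ∈ p) (i : Fin s) : x i ∈ p := by
  let idx : ℕ → Fin s := fun k => ⟨k % s, Nat.mod_lt _ hs⟩
  have hidx_succ : ∀ k, cycSucc hs (idx k) = idx (k + 1) := fun k =>
    Fin.ext (Nat.mod_add_mod k s 1)
  have hidx_val : ∀ i : Fin s, idx i = i := fun i => Fin.ext (Nat.mod_eq_of_lt i.isLt)
  have hstep : ∀ k, x (idx k) - t (idx k) • x (idx (k + 1)) ∈ p := fun k => by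
    simpa only [hidx_succ] using h (idx k)
  have hprod_range : ∏ j ∈ range s, t (idx j) = ∏ i, t i := by
    rw [← Fin.prod_univ_eq_prod_range (fun j => t (idx j))]
    simp only [hidx_val]
  have hround : x (idx 0) - (∏ i, t i) • x (idx 0) ∈ p := by
    have hidx_s : idx s = idx 0 := Fin.ext (by simp [idx])
    simpa only [hprod_range, hidx_s] using p.sub_prod_smul_mem hstep s
  have hbase : x (idx 0) ∈ p := by
    refine (p.smul_mem_iff (sub_ne_zero.2 hprod.symm)).1 ?_
    simpa only [sub_smul, one_smul] using hround
  have hall : ∀ k, x (idx k) ∈ p := fun k => by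
    induction k with
    | zero => exact hbase
    | succ k ih => exact p.mem_of_sub_smul_mem (ht _) ih (hstep k)
  simpa only [hidx_val] using hall i

theorem Submodule.forall_mem_of_sub_smul_parent_mem {V : Type*} {root : V → Prop}
    {par : V → V} {dep : V → ℕ} (hdep : ∀ v, ¬ root v → dep v = dep (par v) + 1)
    {x : V → M} {t : {v // ¬ root v} → K} (ht : ∀ v, t v ≠ 0) (hroot : ∀ v, root v → x v ∈ p)
    (h : ∀ v : {v // ¬ root v}, x (par v) - t v • x v ∈ p) (v : V) : x v ∈ p := by
  induction hd : dep v generalizing v with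
  | zero =>
    by_contra hv
    have := hdep v fun hr => hv (hroot v hr)
    omega
  | succ d ih =>
    by_cases hr : root v
    · exact hroot v hr
    · have hpar : dep (par v) = d := by have := hdep v hr; omega
      exact p.mem_of_sub_smul_mem (ht ⟨v, hr⟩) (ih (par v) hpar) (h ⟨v, hr⟩)

end SubmoduleMembership

theorem Submodule.eq_top_of_forall_single_mem {K V : Type*} [Field K] [Finite V] [DecidableEq V]
    {p : Submodule K (V → K)} (h : ∀ v, (Pi.single v 1 : V → K) ∈ p) : p = ⊤ := by
  rw [eq_top_iff, ← (Pi.basisFun K V).span_eq, Submodule.span_le]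
  rintro _ ⟨v, rfl⟩
  simpa using h v

theorem span_range_eq_top_of_unicyclic {K V : Type*} [Field K] [Finite V] [DecidableEq V]
    {s : ℕ} (hs : 0 < s) (c : Fin s → V) (par : V → V) (dep : V → ℕ)
    (hdep : ∀ v, (¬ ∃ i, c i = v) → dep v = dep (par v) + 1)
    (ψ : Fin s → K) (hψ : ∀ i, ψ i ≠ 0) (hprod : ∏ i, ψ i ≠ 1)
    (β : {v : V // ¬ ∃ i, c i = v} → K) (hβ : ∀ v, β v ≠ 0)
    (α : Fin s ⊕ {v : V // ¬ ∃ i, c i = v} → (V → K))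
    (hα₁ : ∀ i, α (Sum.inl i) = Pi.single (c i) 1 - ψ i • Pi.single (c (cycSucc hs i)) 1)
    (hα₂ : ∀ v, α (Sum.inr v) = Pi.single (par v.1) 1 - β v • Pi.single v.1 1) :
    Submodule.span K (Set.range α) = ⊤ := by
  set S := Submodule.span K (Set.range α)
  have hcycle : ∀ i, (Pi.single (c i) 1 : V → K) ∈ S :=
    S.forall_mem_of_sub_smul_cycSucc_mem hs hψ hprod fun i =>
      hα₁ i ▸ Submodule.subset_span ⟨Sum.inl i, rfl⟩
  refine S.eq_top_of_forall_single_mem (S.forall_mem_of_sub_smul_parent_mem hdep hβ ?_ fun v =>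
    hα₂ v ▸ Submodule.subset_span ⟨Sum.inr v, rfl⟩)
  rintro _ ⟨i, rfl⟩
  exact hcycle i

/-- For a unicyclic graph on `Fin n` (a cycle `c` with antler trees encoded
by a parent function `par` pointing towards the cycle) with connection `φ` and cycle holonomy
`w ≠ 1`, the vectors `α_{ij} = u_i - φ i j • u_j` over the edges span all of `ℝ^n`, and so do
the vectors `e_{ij} = u_i - φ j i • u_j`. -/
theorem unicyclic_span_top (n s : ℕ) (hs : 3 ≤ s)
    (φ : Fin n → Fin n → ℝ)
    (hφnz : ∀ i j, φ i j ≠ 0)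
    (hφinv : ∀ i j, φ j i = (φ i j)⁻¹)
    (c : Fin s → Fin n)
    (par : Fin n → Fin n) (dep : Fin n → ℕ)
    (hdep : ∀ v, (¬ ∃ i, c i = v) → dep v = dep (par v) + 1)
    (w : ℝ) (hw : w = ∏ i : Fin s, φ (c i) (c (cycSucc (by omega) i)))
    (hw1 : w ≠ 1)
    (α e : Fin s ⊕ {v : Fin n // ¬ ∃ i, c i = v} → (Fin n → ℝ))
    (hα₁ : ∀ i, α (Sum.inl i) = (Pi.single (c i) 1 : Fin n → ℝ)
      - φ (c i) (c (cycSucc (by omega) i)) • (Pi.single (c (cycSucc (by omega) i)) 1 : Fin n → ℝ))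
    (hα₂ : ∀ v, α (Sum.inr v) = (Pi.single (par v.1) 1 : Fin n → ℝ)
      - φ (par v.1) v.1 • (Pi.single v.1 1 : Fin n → ℝ))
    (he₁ : ∀ i, e (Sum.inl i) = (Pi.single (c i) 1 : Fin n → ℝ)
      - φ (c (cycSucc (by omega) i)) (c i) • (Pi.single (c (cycSucc (by omega) i)) 1 : Fin n → ℝ))
    (he₂ : ∀ v, e (Sum.inr v) = (Pi.single (par v.1) 1 : Fin n → ℝ)
      - φ v.1 (par v.1) • (Pi.single v.1 1 : Fin n → ℝ)) :
    Submodule.span ℝ (Set.range α) = ⊤ ∧ Submodule.span ℝ (Set.range e) = ⊤ := by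
  have hs0 : 0 < s := by omega
  have hw_rev : ∏ i, φ (c (cycSucc hs0 i)) (c i) = w⁻¹ := by
    rw [hw, ← prod_inv_distrib]
    exact prod_congr rfl fun i _ => hφinv _ _
  constructor
  · exact span_range_eq_top_of_unicyclic hs0 c par dep hdep _ (fun _ => hφnz _ _) (hw ▸ hw1)
      _ (fun _ => hφnz _ _) α hα₁ hα₂
  · exact span_range_eq_top_of_unicyclic hs0 c par dep hdep _ (fun _ => hφnz _ _)
      (hw_rev ▸ inv_ne_one.2 hw1) _ (fun _ => hφnz _ _) e he₁ he₂
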